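/- arXiv:math/0403142 — 6 statements merged into one kernel-verified Lean document; each statement's English description precedes it below -/
import Mathlib

section
/- For the standard representation of SU(n) on ℂ^n (n ≥ 2), every (n−1)-dimensional subspace W of ℂ^n has trivial pointwise stabilizer in SU(n), while for every k < n−1 there exists a k-dimensional subspace whose pointwise stabilizer in SU(n) is infinite. Hence the fixing dimension of the standard representation of SU(n) equals n−1. -/
/-!
A unitary map fixing a hyperplane `W` pointwise also preserves the line `Wᗮ`, on which it acts
by a scalar `c`; its determinant is then `c`, so determinant one forces it to be the identity.
Conversely, when `k ≤ n - 2` the span of the first `k` standard basis vectors is fixed by the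
circle of diagonal matrices `diag(1, …, 1, z, z⁻¹)`, `|z| = 1`.
-/

open Module

namespace LinearMap

variable {K V : Type*} [Field K] [AddCommGroup V] [Module K V] [FiniteDimensional K V]

theorem det_eq_det_restrict_of_isCompl {f : V →ₗ[K] V} {W U : Submodule K V} (hWU : IsCompl W U)
    (hfW : ∀ w ∈ W, f w = w) (hfU : ∀ u ∈ U, f u ∈ U) :
    f.det = (f.restrict hfU).det := by
  set e := Submodule.prodEquivOfIsCompl W U hWU
  have hconj : f ∘ₗ e.toLinearMap = e.toLinearMap ∘ₗ prodMap id (f.restrict hfU) := by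
    ext x
    · simp [e, hfW x x.2]
    · simp [e]
  rw [← det_conj f e.symm, LinearEquiv.symm_symm, hconj, ← comp_assoc,
    LinearEquiv.symm_comp, id_comp, det_prodMap, det_id, one_mul]

theorem eq_id_of_det_eq_one_of_finrank_eq_one (hV : finrank K V = 1) {f : V →ₗ[K] V}
    (hdet : f.det = 1) : f = id := by
  obtain ⟨c, rfl, -⟩ := f.existsUnique_eq_smul_id_of_finrank_eq_one hV
  rw [det_smul, hV, det_id, pow_one, mul_one] at hdet
  rw [hdet, one_smul]

theorem eq_id_of_det_eq_one_of_isCompl {f : V →ₗ[K] V} {W U : Submodule K V} (hWU : IsCompl W U)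
    (hU : finrank K U = 1) (hfW : ∀ w ∈ W, f w = w) (hfU : ∀ u ∈ U, f u ∈ U)
    (hdet : f.det = 1) : f = id := by
  have hrestrict : f.restrict hfU = id := eq_id_of_det_eq_one_of_finrank_eq_one hU <| by
    rwa [← det_eq_det_restrict_of_isCompl hWU hfW hfU]
  refine ext_on_codisjoint hWU.codisjoint hfW (fun u hu ↦ ?_)
  simpa using congrArg Subtype.val (LinearMap.congr_fun hrestrict ⟨u, hu⟩)

section InnerProductSpace

variable {𝕜 E : Type*} [RCLike 𝕜] [NormedAddCommGroup E] [InnerProductSpace 𝕜 E]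

theorem mapsTo_orthogonal_of_inner_map_map {f : E →ₗ[𝕜] E}
    (hf : ∀ x y, inner 𝕜 (f x) (f y) = inner 𝕜 x y) {W : Submodule 𝕜 E}
    (hfW : ∀ w ∈ W, f w = w) : ∀ u ∈ Wᗮ, f u ∈ Wᗮ := by
  intro u hu w hw
  rw [← hfW w hw, hf]
  exact hu w hw

theorem eq_id_of_inner_map_map_of_det_eq_one [FiniteDimensional 𝕜 E] {f : E →ₗ[𝕜] E}
    (hf : ∀ x y, inner 𝕜 (f x) (f y) = inner 𝕜 x y) {W : Submodule 𝕜 E}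
    (hW : finrank 𝕜 W + 1 = finrank 𝕜 E) (hfW : ∀ w ∈ W, f w = w) (hdet : f.det = 1) :
    f = id :=
  eq_id_of_det_eq_one_of_isCompl W.isCompl_orthogonal
    (by have := W.finrank_add_finrank_orthogonal; omega) hfW
    (mapsTo_orthogonal_of_inner_map_map hf hfW) hdet

end InnerProductSpace

end LinearMap

instance : Infinite Circle :=
  Set.infinite_univ_iff.mp <| ((Set.Ico_infinite Real.two_pi_pos).image
    (Circle.exp_injOn_Ico (by linarith))).mono (Set.subset_univ _)

namespace Matrix

variable {ι : Type*} [Fintype ι] [DecidableEq ι]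

theorem eq_one_of_mem_specialUnitaryGroup_of_forall_mulVec_eq {𝕜 : Type*} [RCLike 𝕜]
    {A : Matrix ι ι 𝕜} (hA : A ∈ specialUnitaryGroup ι 𝕜) {W : Submodule 𝕜 (ι → 𝕜)}
    (hW : finrank 𝕜 W + 1 = Fintype.card ι) (hfix : ∀ w ∈ W, A *ᵥ w = w) : A = 1 := by
  obtain ⟨hunitary, hdet⟩ := mem_specialUnitaryGroup_iff.mp hA
  set L := WithLp.linearEquiv 2 𝕜 (ι → 𝕜)
  have hinner : ∀ x y, inner 𝕜 (toEuclideanLin A x) (toEuclideanLin A y) = inner 𝕜 x y :=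
    ContinuousLinearMap.inner_map_map_of_mem_unitary
      (Unitary.map_mem (toEuclideanCLM (n := ι) (𝕜 := 𝕜)) hunitary)
  have hid : toEuclideanLin A = LinearMap.id := by
    refine LinearMap.eq_id_of_inner_map_map_of_det_eq_one hinner (W := W.comap L.toLinearMap)
      ?_ ?_ (by rwa [LinearMap.det_toLpLin])
    · rw [Submodule.comap_equiv_eq_map_symm, LinearEquiv.finrank_map_eq,
        finrank_euclideanSpace, hW]
    · intro w hw
      rw [toLpLin_apply, hfix w.ofLp hw, WithLp.toLp_ofLp]
  exact toEuclideanLin.injective (hid.trans (toLpLin_one 2).symm)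

theorem diagonal_coe_mem_specialUnitaryGroup {d : ι → Circle} (hd : ∏ i, d i = 1) :
    diagonal (fun i ↦ (d i : ℂ)) ∈ specialUnitaryGroup ι ℂ := by
  refine mem_specialUnitaryGroup_iff.mpr ⟨?_, ?_⟩
  · rw [mem_unitaryGroup_iff', star_eq_conjTranspose, diagonal_conjTranspose,
      diagonal_mul_diagonal, ← diagonal_one]
    congr 1
    ext i
    simp [← Circle.coe_inv_eq_conj]
  · rw [det_diagonal]
    exact (map_prod Circle.coeHom d _).symm.trans (by rw [hd, map_one])

noncomputable def diagonalPhasePair (a b : ι) (z : Circle) : specialUnitaryGroup ι ℂ :=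
  ⟨diagonal fun i ↦ ((Pi.mulSingle a z * Pi.mulSingle b z⁻¹ : ι → Circle) i : ℂ),
    diagonal_coe_mem_specialUnitaryGroup (by simp [Finset.prod_mul_distrib])⟩

theorem diagonalPhasePair_injective {a b : ι} (hab : a ≠ b) :
    Function.Injective (diagonalPhasePair a b) := by
  intro z z' h
  have hentry := congrFun (congrFun (congrArg Subtype.val h) a) a
  exact Circle.coe_injective (by simpa [diagonalPhasePair, Pi.mulSingle_eq_of_ne hab] using hentry)

theorem diagonalPhasePair_mulVec {a b : ι} (z : Circle) {w : ι → ℂ} (ha : w a = 0)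
    (hb : w b = 0) :
    (diagonalPhasePair a b z : Matrix ι ι ℂ) *ᵥ w = w := by
  ext i
  rw [diagonalPhasePair, mulVec_diagonal]
  by_cases hia : i = a
  · simp [hia, ha]
  by_cases hib : i = b
  · simp [hib, hb]
  simp [Pi.mulSingle_eq_of_ne hia, Pi.mulSingle_eq_of_ne hib]

theorem infinite_setOf_forall_mulVec_eq {a b : ι} (hab : a ≠ b) {W : Submodule ℂ (ι → ℂ)}
    (hW : ∀ w ∈ W, w a = 0 ∧ w b = 0) :
    {g : specialUnitaryGroup ι ℂ | ∀ w ∈ W, (g : Matrix ι ι ℂ) *ᵥ w = w}.Infinite :=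
  Set.infinite_of_injective_forall_mem (diagonalPhasePair_injective hab)
    fun z w hw ↦ diagonalPhasePair_mulVec z (hW w hw).1 (hW w hw).2

end Matrix

section StandardFlag

variable (K : Type*) [Field K] {k n : ℕ}

noncomputable def spanFirstStdBasis (h : k ≤ n) : Submodule K (Fin n → K) :=
  Submodule.span K (Set.range (Pi.basisFun K (Fin n) ∘ Fin.castLE h))

theorem finrank_spanFirstStdBasis (h : k ≤ n) : finrank K (spanFirstStdBasis K h) = k := by
  rw [spanFirstStdBasis, finrank_span_eq_card
    ((Pi.basisFun K (Fin n)).linearIndependent.comp _ (Fin.castLE_injective h)), Fintype.card_fin]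

variable {K}

theorem apply_eq_zero_of_mem_spanFirstStdBasis (h : k ≤ n) {w : Fin n → K}
    (hw : w ∈ spanFirstStdBasis K h) {j : Fin n} (hj : k ≤ j) : w j = 0 := by
  refine (Submodule.span_le (p := LinearMap.ker (LinearMap.proj j)) |>.mpr ?_) hw
  rintro _ ⟨i, rfl⟩
  have hij : Fin.castLE h i ≠ j := Fin.ne_of_lt (by rw [Fin.lt_def]; simp; omega)
  simp [Pi.single_eq_of_ne' hij]

end StandardFlag

/-- The fixing dimension of the standard representation of `SU(n)` on `ℂⁿ` (`n ≥ 2`)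
is `n − 1`: every `(n−1)`-dimensional subspace has trivial pointwise stabilizer,
while for every `k < n − 1` some `k`-dimensional subspace has infinite pointwise
stabilizer. -/
theorem fixing_dimension_specialUnitaryGroup (n : ℕ) (hn : 2 ≤ n) :
    (∀ W : Submodule ℂ (Fin n → ℂ), Module.finrank ℂ W = n - 1 →
      ∀ g : Matrix.specialUnitaryGroup (Fin n) ℂ,
        (∀ w ∈ W, Matrix.mulVec (g : Matrix (Fin n) (Fin n) ℂ) w = w) → g = 1) ∧
    (∀ k < n - 1, ∃ W : Submodule ℂ (Fin n → ℂ), Module.finrank ℂ W = k ∧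
      {g : Matrix.specialUnitaryGroup (Fin n) ℂ |
        ∀ w ∈ W, Matrix.mulVec (g : Matrix (Fin n) (Fin n) ℂ) w = w}.Infinite) := by
  refine ⟨fun W hW g hg ↦ ?_, fun k hk ↦ ?_⟩
  · exact Subtype.ext <| Matrix.eq_one_of_mem_specialUnitaryGroup_of_forall_mulVec_eq g.2
      (by rw [hW, Fintype.card_fin]; omega) hg
  · have hkn : k ≤ n := by omega
    refine ⟨spanFirstStdBasis ℂ hkn, finrank_spanFirstStdBasis ℂ hkn, ?_⟩
    refine Matrix.infinite_setOf_forall_mulVec_eq (a := ⟨n - 2, by omega⟩)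
      (b := ⟨n - 1, by omega⟩) (by simp [Fin.ext_iff]; omega) fun w hw ↦ ⟨?_, ?_⟩ <;>
      exact apply_eq_zero_of_mem_spanFirstStdBasis hkn hw (by simp; omega)
end

section
/- Let g₁, …, g_m be pairwise commuting unitary endomorphisms of a complex inner product space Σ of dimension 2^m, such that each g_j is diagonalizable with eigenvalues exp(i t_j) and exp(−i t_j), and all 2^m simultaneous eigenspaces are one-dimensional. Then the product g = g₁ ⋯ g_m has eigenvalues exp(i(±t₁ ± t₂ ± ⋯ ± t_m)) over all independent sign choices, each simultaneous sign pattern contributing a one-dimensional eigenspace; consequently, if g ≠ 1 then the eigenvalue 1 of g has multiplicity at most 2^{m−1}. -/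
/-!
Each `b ε` is a joint eigenvector of the `g j`, so it is an eigenvector of the product with
eigenvalue `∏ⱼ exp(± i tⱼ)`; since `b` is a basis, the `μ`-eigenspace of the product is spanned
by the `b ε` with eigenvalue `μ`. For the bound, write `aⱼ = exp(i tⱼ)` in the circle group.
If some `aⱼ² ≠ 1`, flipping the `j`-th sign multiplies the eigenvalue by `aⱼ^(∓2) ≠ 1`; this
involution of the sign patterns maps those with eigenvalue `1` to ones without, so at most half of
them have eigenvalue `1`. Otherwise `aⱼ = aⱼ⁻¹` for all `j`, all eigenvalues coincide, and the product is
a scalar `≠ 1`.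
-/

open Module Complex Finset

theorem Finset.noncommProd_apply_of_apply_eq_smul {ι R V : Type*} [CommSemiring R]
    [AddCommMonoid V] [Module R V] [DecidableEq ι] (g : ι → Module.End R V) {x : V} {c : ι → R}
    (hx : ∀ j, g j x = c j • x) (s : Finset ι)
    (hcomm : (s : Set ι).Pairwise (Function.onFun Commute g)) :
    s.noncommProd g hcomm x = (∏ j ∈ s, c j) • x := by
  induction s using Finset.induction_on with
  | empty => simp
  | insert a s ha ih =>
    rw [noncommProd_insert_of_notMem _ _ _ _ ha, Module.End.mul_apply, ih, map_smul, hx,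
      smul_smul, prod_insert ha, mul_comm]

namespace Module.Basis

variable {ι K V : Type*} [Field K] [AddCommGroup V] [Module K V]
  (b : Basis ι K V) {f : Module.End K V} {lam : ι → K}

theorem repr_apply_of_apply_eq_smul (hf : ∀ i, f (b i) = lam i • b i) (x : V) (i : ι) :
    b.repr (f x) i = lam i * b.repr x i := by
  have : (b.coord i).comp f = lam i • b.coord i :=
    b.ext fun k => by
      by_cases hk : k = i
      · subst hk; simp [hf]
      · simp [hf, hk]
  simpa using LinearMap.congr_fun this x

theorem eigenspace_eq_span_of_apply_eq_smul (hf : ∀ i, f (b i) = lam i • b i) (μ : K) :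
    End.eigenspace f μ = Submodule.span K (b '' {i | lam i = μ}) := by
  apply le_antisymm
  · intro x hx
    rw [b.mem_span_image]
    intro i hi
    have h := b.repr_apply_of_apply_eq_smul hf x i
    rw [End.mem_eigenspace_iff.mp hx, map_smul, Finsupp.smul_apply, smul_eq_mul] at h
    exact (mul_right_cancel₀ (Finsupp.mem_support_iff.mp hi) h).symm
  · rw [Submodule.span_le]
    rintro _ ⟨i, hi, rfl⟩
    rw [SetLike.mem_coe, End.mem_eigenspace_iff, hf, show lam i = μ from hi]

theorem finrank_eigenspace_of_apply_eq_smul [Fintype ι] (hf : ∀ i, f (b i) = lam i • b i)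
    (μ : K) : finrank K (End.eigenspace f μ) = Nat.card {i // lam i = μ} := by
  classical
  rw [b.eigenspace_eq_span_of_apply_eq_smul hf, Set.image_eq_range,
    finrank_span_eq_card (b := fun i : {i | lam i = μ} => b i)
      (b.linearIndependent.comp _ Subtype.val_injective),
    Nat.card_eq_fintype_card]
  rfl

end Module.Basis

theorem Finset.two_mul_card_filter_le_card_of_injective {α : Type*} [Fintype α] (p : α → Prop)
    [DecidablePred p] {σ : α → α} (hσ : σ.Injective) (hp : ∀ x, p x → ¬ p (σ x)) :
    2 * #{x | p x} ≤ Fintype.card α := by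
  have : #{x | p x} ≤ #{x | ¬ p x} :=
    card_le_card_of_injOn σ (fun x hx => by simp_all) hσ.injOn
  calc 2 * #{x | p x} ≤ #{x | p x} + #{x | ¬ p x} := by omega
    _ = Fintype.card α := card_filter_add_card_filter_not (fun x => p x)

section SignedProd

variable {ι G : Type*} [Fintype ι] [CommGroup G]

def signedProd (a : ι → G) (ε : ι → Bool) : G := ∏ j, if ε j then a j else (a j)⁻¹

theorem signedProd_update_not [DecidableEq ι] (a : ι → G) (ε : ι → Bool) (j : ι) :
    signedProd a (Function.update ε j (!ε j))
      = signedProd a ε * if ε j then (a j)⁻¹ ^ 2 else a j ^ 2 := by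
  have hterm : ∀ k, (if Function.update ε j (!ε j) k then a k else (a k)⁻¹)
      = Function.update (fun k => if ε k then a k else (a k)⁻¹) j
          (if !ε j then a j else (a j)⁻¹) k :=
    Function.apply_update (fun k (s : Bool) => if s then a k else (a k)⁻¹) ε j _
  simp only [signedProd, hterm]
  rw [prod_update_of_mem (mem_univ j), ← mul_prod_erase univ _ (mem_univ j),
    sdiff_singleton_eq_erase]
  generalize (∏ k ∈ univ.erase j, _ : G) = P
  cases ε j <;> simp only [Bool.not_false, Bool.not_true, Bool.false_eq_true, if_true, if_false] <;>
    rw [mul_right_comm] <;> group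

theorem signedProd_eq_prod_of_sq_eq_one {a : ι → G} (ha : ∀ j, a j ^ 2 = 1) (ε : ι → Bool) :
    signedProd a ε = ∏ j, a j :=
  prod_congr rfl fun j _ => by
    split_ifs
    · rfl
    · exact inv_eq_of_mul_eq_one_left (by rw [← sq, ha])

theorem card_signedProd_eq_one_le [DecidableEq ι] [DecidableEq G] {a : ι → G}
    (ha : ∃ ε, signedProd a ε ≠ 1) :
    #{ε | signedProd a ε = 1} ≤ 2 ^ (Fintype.card ι - 1) := by
  by_cases hsq : ∀ j, a j ^ 2 = 1
  · obtain ⟨ε₀, hε₀⟩ := ha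
    have hempty : #{ε | signedProd a ε = 1} = 0 := by
      rw [card_eq_zero, filter_eq_empty_iff]
      intro ε _
      rwa [signedProd_eq_prod_of_sq_eq_one hsq, ← signedProd_eq_prod_of_sq_eq_one hsq ε₀]
    exact hempty ▸ Nat.zero_le _
  · obtain ⟨j, hj⟩ := not_forall.mp hsq
    let toggle : (ι → Bool) → (ι → Bool) := fun ε => Function.update ε j (!ε j)
    have htoggle : toggle.Involutive := fun ε => by simp [toggle]
    have htoggle_ne : ∀ ε, signedProd a ε = 1 → signedProd a (toggle ε) ≠ 1 := by
      intro ε hε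
      rw [signedProd_update_not, hε, one_mul]
      split_ifs
      · rwa [inv_pow, inv_ne_one]
      · exact hj
    have hcard := two_mul_card_filter_le_card_of_injective _ htoggle.injective htoggle_ne
    have hpos : 0 < Fintype.card ι := Fintype.card_pos_iff.mpr ⟨j⟩
    rw [Fintype.card_fun, Fintype.card_bool, ← Nat.two_pow_pred_mul_two hpos] at hcard
    omega

theorem Circle.coe_signedProd_exp (t : ι → ℝ) (ε : ι → Bool) :
    (↑(signedProd (fun j => Circle.exp (t j)) ε) : ℂ)
      = Complex.exp (Complex.I * ∑ j, if ε j then (t j : ℂ) else -(t j : ℂ)) := by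
  change Circle.coeHom (∏ j, _) = _
  rw [map_prod, mul_sum, Complex.exp_sum]
  refine prod_congr rfl fun j _ => ?_
  have hexp : Circle.coeHom (Circle.exp (t j)) = Complex.exp (I * t j) :=
    (Circle.coe_exp (t j)).trans (by rw [mul_comm])
  split_ifs <;> simp [hexp, Complex.exp_neg]

end SignedProd

theorem product_of_commuting_unitaries_eigenvalues_general
    (m : ℕ) (SP : Type*) [NormedAddCommGroup SP] [InnerProductSpace ℂ SP]
    (b : Basis (Fin m → Bool) ℂ SP)
    (t : Fin m → ℝ) (g : Fin m → (SP →ₗ[ℂ] SP))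
    (hcomm : ((Finset.univ : Finset (Fin m)) : Set (Fin m)).Pairwise (Function.onFun Commute g))
    (hdiag : ∀ j (ε : Fin m → Bool),
      g j (b ε) = Complex.exp (Complex.I * (if ε j then (t j : ℂ) else -(t j : ℂ))) • b ε) :
    (∀ ε : Fin m → Bool,
      (Finset.univ.noncommProd g hcomm) (b ε)
        = Complex.exp (Complex.I * ∑ j, (if ε j then (t j : ℂ) else -(t j : ℂ))) • b ε) ∧
    (∀ μ : ℂ, Module.finrank ℂ
        (Module.End.eigenspace (Finset.univ.noncommProd g hcomm) μ)
      = Nat.card {ε : Fin m → Bool //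
          Complex.exp (Complex.I * ∑ j, (if ε j then (t j : ℂ) else -(t j : ℂ))) = μ}) ∧
    ((Finset.univ.noncommProd g hcomm) ≠ 1 →
      Module.finrank ℂ
        (Module.End.eigenspace (Finset.univ.noncommProd g hcomm) 1) ≤ 2 ^ (m - 1)) := by
  classical
  have hprod : ∀ ε : Fin m → Bool, univ.noncommProd g hcomm (b ε)
      = Complex.exp (I * ∑ j, if ε j then (t j : ℂ) else -(t j : ℂ)) • b ε := fun ε => by
    rw [univ.noncommProd_apply_of_apply_eq_smul g (fun j => hdiag j ε), ← Complex.exp_sum,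
      ← mul_sum]
  have hfinrank := b.finrank_eigenspace_of_apply_eq_smul hprod
  refine ⟨hprod, hfinrank, fun hne => ?_⟩
  have hne' : ∃ ε, signedProd (fun j => Circle.exp (t j)) ε ≠ 1 := by
    by_contra! h
    exact hne (b.ext fun ε => by simp [hprod, ← Circle.coe_signedProd_exp, h])
  have hcard := card_signedProd_eq_one_le hne'
  rw [Fintype.card_fin] at hcard
  rw [hfinrank, Nat.card_eq_fintype_card, Fintype.card_subtype]
  simpa only [← Circle.coe_signedProd_exp, Circle.coe_eq_one] using hcard

/-- Let `g₁, …, g_m` be pairwise commuting unitary endomorphisms of a complex inner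
product space `SP` of dimension `2^m` which are simultaneously diagonalized by an
orthonormal basis `b` indexed by sign patterns `ε : Fin m → Bool`, with
`g j (b ε) = exp(± i t j) • b ε` according to the sign `ε j`.  Then the product
`g = g₁ ⋯ g_m` acts on `b ε` by `exp(i(±t₁ ± ⋯ ± t_m))`, the multiplicity of any
eigenvalue `μ` of `g` is the number of sign patterns realizing it, and if `g ≠ 1`
then the eigenvalue `1` of `g` has multiplicity at most `2^(m-1)`. -/
theorem product_of_commuting_unitaries_eigenvalues
    (m : ℕ) (SP : Type*) [NormedAddCommGroup SP] [InnerProductSpace ℂ SP]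
    (b : Basis (Fin m → Bool) ℂ SP) (hb : Orthonormal ℂ b)
    (t : Fin m → ℝ) (g : Fin m → (SP →ₗ[ℂ] SP))
    (hunitary : ∀ j (x : SP), ‖g j x‖ = ‖x‖)
    (hcomm : ((Finset.univ : Finset (Fin m)) : Set (Fin m)).Pairwise (Function.onFun Commute g))
    (hdiag : ∀ j (ε : Fin m → Bool),
      g j (b ε) = Complex.exp (Complex.I * (if ε j then (t j : ℂ) else -(t j : ℂ))) • b ε) :
    (∀ ε : Fin m → Bool,
      (Finset.univ.noncommProd g hcomm) (b ε)
        = Complex.exp (Complex.I * ∑ j, (if ε j then (t j : ℂ) else -(t j : ℂ))) • b ε) ∧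
    (∀ μ : ℂ, Module.finrank ℂ
        (Module.End.eigenspace (Finset.univ.noncommProd g hcomm) μ)
      = Nat.card {ε : Fin m → Bool //
          Complex.exp (Complex.I * ∑ j, (if ε j then (t j : ℂ) else -(t j : ℂ))) = μ}) ∧
    ((Finset.univ.noncommProd g hcomm) ≠ 1 →
      Module.finrank ℂ
        (Module.End.eigenspace (Finset.univ.noncommProd g hcomm) 1) ≤ 2 ^ (m - 1)) :=
  product_of_commuting_unitaries_eigenvalues_general m SP b t g hcomm hdiag
end

section
/- Let t₁, …, t_m be real numbers, and assume that the unitary g on ℂ^{2^m} with spectrum {exp(i(ε₁t₁ + ⋯ + ε_m t_m)) : ε_j ∈ {±1}} (each with multiplicity one) is not the identity. Then the number of sign vectors (ε₁,…,ε_m) ∈ {±1}^m with ε₁t₁ + ⋯ + ε_m t_m ∈ 2πℤ is at most 2^{m−1}. -/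
open Real Finset
open scoped Classical

/-- The predicate: signed sum lies in `c + 2πℤ`. -/
def SP (m : ℕ) (t : Fin m → ℝ) (c : ℝ) (ε : Fin m → Bool) : Prop :=
  ∃ k : ℤ, ∑ j, (if ε j then t j else - t j) = c + 2 * Real.pi * k

lemma SP_cons (m : ℕ) (t : Fin (m+1) → ℝ) (c : ℝ) (ε : Fin (m+1) → Bool) :
    SP (m+1) t c ε ↔
      SP m (fun j => t j.succ) (c - (if ε 0 then t 0 else - t 0)) (Fin.tail ε) := by
  unfold SP
  rw [Fin.sum_univ_succ]
  simp only [Fin.tail]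
  unfold Fin.tail
  constructor
  · rintro ⟨k, hk⟩; exact ⟨k, by linarith⟩
  · rintro ⟨k, hk⟩; exact ⟨k, by linarith⟩

lemma card_cons (m : ℕ) (t : Fin (m+1) → ℝ) (c : ℝ) (b : Bool) :
    (univ.filter (fun ε : Fin (m+1) → Bool => SP (m+1) t c ε ∧ ε 0 = b)).card
      = (univ.filter (SP m (fun j => t j.succ) (c - (if b then t 0 else - t 0)))).card := by
  refine Finset.card_nbij' (fun ε => Fin.tail ε) (fun ε' => Fin.cons b ε') ?_ ?_ ?_ ?_
  · intro ε hε
    simp only [Finset.mem_coe, Finset.mem_filter, Finset.mem_univ, true_and] at hε ⊢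
    obtain ⟨hsp, h0⟩ := hε
    rw [SP_cons, h0] at hsp
    exact hsp
  · intro ε' hε'
    simp only [Finset.mem_coe, Finset.mem_filter, Finset.mem_univ, true_and] at hε' ⊢
    refine ⟨?_, by simp⟩
    rw [SP_cons]
    simpa [Fin.tail_cons] using hε'
  · intro ε hε
    simp only [Finset.mem_coe, Finset.mem_filter, Finset.mem_univ, true_and] at hε
    rw [← hε.2]
    exact Fin.cons_self_tail ε
  · intro ε' _
    simp [Fin.tail_cons]

lemma key (m : ℕ) (t : Fin m → ℝ) (c : ℝ) :
    (∀ ε : Fin m → Bool, SP m t c ε) ∨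
      2 * (univ.filter (SP m t c)).card ≤ 2 ^ m := by
  induction m generalizing c with
  | zero =>
    by_cases h : SP 0 t c (fun _ => true)
    · left
      intro ε
      convert h using 2
    · right
      have hz : (univ.filter (SP 0 t c)) = ∅ := by
        apply Finset.filter_eq_empty_iff.2
        intro ε _ hsp
        exact h (by convert hsp using 2)
      rw [hz]
      simp
  | succ m ih =>
    -- split the count by the value of ε 0
    have h1 := card_cons m t c true
    have h2 := card_cons m t c false
    norm_num at h1 h2
    have hsplit : (univ.filter (SP (m+1) t c)).card
        = (univ.filter (SP m (fun j => t j.succ) (c - t 0))).card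
          + (univ.filter (SP m (fun j => t j.succ) (c + t 0))).card := by
      rw [← h1, ← h2]
      rw [← Finset.card_filter_add_card_filter_not
          (p := fun ε : Fin (m+1) → Bool => ε 0 = true) (s := univ.filter (SP (m+1) t c))]
      simp only [Finset.filter_filter, Bool.not_eq_true]
    have hcard : ∀ c' : ℝ, (univ.filter (SP m (fun j => t j.succ) c')).card ≤ 2 ^ m := by
      intro c'
      calc _ ≤ (univ : Finset (Fin m → Bool)).card := Finset.card_filter_le _ _
        _ = 2 ^ m := by simp
    rcases ih (fun j => t j.succ) (c - t 0) with h₁ | h₁ <;> rcases ih (fun j => t j.succ) (c + t 0) with h₂ | h₂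
    · -- all on both sides: everything satisfies SP
      left
      intro ε
      rw [SP_cons]
      cases h0 : ε 0
      · simp only [Bool.false_eq_true, if_neg, if_false, sub_neg_eq_add]
        exact h₂ (Fin.tail ε)
      · simpa using h₁ (Fin.tail ε)
    · -- all on the (c - t 0) side
      by_cases hex : ∃ ε' : Fin m → Bool, SP m (fun j => t j.succ) (c + t 0) ε'
      · left
        obtain ⟨w, kw, hw⟩ := hex
        obtain ⟨kw', hw'⟩ := h₁ w
        intro ε
        rw [SP_cons]
        cases h0 : ε 0
        · obtain ⟨k, hk⟩ := h₁ (Fin.tail ε)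
          refine ⟨k + kw - kw', ?_⟩
          push_cast
          simp only [Bool.false_eq_true, if_false, sub_neg_eq_add]
          beta_reduce at hw hw' hk ⊢
          linarith
        · simpa using h₁ (Fin.tail ε)
      · right
        have hzero : (univ.filter (SP m (fun j => t j.succ) (c + t 0))) = ∅ := by
          apply Finset.filter_eq_empty_iff.2
          intro ε _ hsp
          exact hex ⟨ε, hsp⟩
        rw [hsplit, hzero]
        have hb := hcard (c - t 0)
        have hp : (2:ℕ) ^ (m+1) = 2 ^ m + 2 ^ m := by ring
        simp only [Finset.card_empty]
        clear h1 h2 ih hcard hex hzero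
        omega
    · -- all on the (c + t 0) side (symmetric)
      by_cases hex : ∃ ε' : Fin m → Bool, SP m (fun j => t j.succ) (c - t 0) ε'
      · left
        obtain ⟨w, kw, hw⟩ := hex
        obtain ⟨kw', hw'⟩ := h₂ w
        intro ε
        rw [SP_cons]
        cases h0 : ε 0
        · simp only [Bool.false_eq_true, if_false, sub_neg_eq_add]
          exact h₂ (Fin.tail ε)
        · obtain ⟨k, hk⟩ := h₂ (Fin.tail ε)
          refine ⟨k + kw - kw', ?_⟩
          push_cast
          simp only [if_pos]
          beta_reduce at hw hw' hk ⊢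
          linarith
      · right
        have hzero : (univ.filter (SP m (fun j => t j.succ) (c - t 0))) = ∅ := by
          apply Finset.filter_eq_empty_iff.2
          intro ε _ hsp
          exact hex ⟨ε, hsp⟩
        rw [hsplit, hzero]
        have hb := hcard (c + t 0)
        have hp : (2:ℕ) ^ (m+1) = 2 ^ m + 2 ^ m := by ring
        simp only [Finset.card_empty]
        clear h1 h2 ih hcard hex hzero
        omega
    · -- at most half on both sides
      right
      rw [hsplit]
      have hp : (2:ℕ) ^ (m+1) = 2 ^ m + 2 ^ m := by ring
      clear h1 h2 ih hcard
      omega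

/-- If not every signed sum `ε₁t₁ + ⋯ + ε_m t_m` lies in `2πℤ` (i.e. the associated
unitary with spectrum `exp(i(ε₁t₁ + ⋯ + ε_m t_m))` is not the identity), then the
number of sign vectors whose signed sum lies in `2πℤ` is at most `2^(m-1)`. -/
theorem sign_sums_in_two_pi_int_at_most_half
    (m : ℕ) (t : Fin m → ℝ)
    (h : ¬ ∀ ε : Fin m → Bool,
      ∃ k : ℤ, ∑ j, (if ε j then t j else - t j) = 2 * Real.pi * k) :
    Nat.card {ε : Fin m → Bool //
        ∃ k : ℤ, ∑ j, (if ε j then t j else - t j) = 2 * Real.pi * k}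
      ≤ 2 ^ (m - 1) := by
  have hSP : ∀ ε : Fin m → Bool,
      (SP m t 0 ε ↔ ∃ k : ℤ, ∑ j, (if ε j then t j else - t j) = 2 * Real.pi * k) := by
    intro ε; unfold SP; simp
  rcases key m t 0 with hk | hk
  · exact absurd (fun ε => (hSP ε).1 (hk ε)) h
  · have hcard : Nat.card {ε : Fin m → Bool //
        ∃ k : ℤ, ∑ j, (if ε j then t j else - t j) = 2 * Real.pi * k}
        = (univ.filter (SP m t 0)).card := by
      rw [Nat.card_eq_fintype_card, Fintype.card_subtype]
      congr 1
      exact Finset.filter_congr (fun ε _ => by rw [hSP])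
    rw [hcard]
    clear hcard hSP h
    rcases Nat.eq_zero_or_pos m with rfl | hm
    · simp only [pow_zero] at hk ⊢
      omega
    · have h2 : 2 ^ m = 2 * 2 ^ (m - 1) := by
        rw [← pow_succ']
        congr 1
        omega
      omega
end

section
/- Let G be a topological group with a left-invariant metric, acting continuously on a compact metric space K. Suppose p_i → p in K and h_i ∈ G satisfy h_i · p_i = p_i, h_i ≠ e, and d(e, h_i) → 0. Write h_i = exp(t_i v_i) with unit vectors v_i in the Lie algebra and t_i → 0, and suppose v_i → v. Then for every t ∈ ℝ, exp(t v) · p = p; in particular the stabilizer of p contains a one-parameter subgroup. -/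
open Filter Topology

/-!
The integer multiples `k tᵢ` of the shrinking step sizes are dense enough to approach any
`s ∈ ℝ`: take `kᵢ = ⌊s / tᵢ⌋`. Then `exp((kᵢ tᵢ) • vᵢ) = hᵢ ^ kᵢ` still fixes `pᵢ`, and passing
to the limit with the continuity of `exp` and of the action gives `exp(s • v) • p = p`.
-/

theorem abs_floor_div_mul_sub_le {s t : ℝ} (ht : t ≠ 0) : |(⌊s / t⌋ : ℝ) * t - s| ≤ |t| := by
  have h_floor : |(⌊s / t⌋ : ℝ) - s / t| ≤ 1 := by
    rw [abs_sub_comm, abs_of_nonneg (sub_nonneg.2 (Int.floor_le _))]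
    linarith [Int.lt_floor_add_one (s / t)]
  calc |(⌊s / t⌋ : ℝ) * t - s| = |(⌊s / t⌋ : ℝ) - s / t| * |t| := by
        rw [← abs_mul, sub_mul, div_mul_cancel₀ _ ht]
    _ ≤ |t| := mul_le_of_le_one_left (abs_nonneg _) h_floor

theorem tendsto_floor_div_mul {ι : Type*} {l : Filter ι} {t : ι → ℝ}
    (ht : Tendsto t l (𝓝 0)) (ht0 : ∀ i, t i ≠ 0) (s : ℝ) :
    Tendsto (fun i => (⌊s / t i⌋ : ℝ) * t i) l (𝓝 s) := by
  rw [tendsto_iff_dist_tendsto_zero]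
  refine squeeze_zero (fun _ => dist_nonneg) (fun i => abs_floor_div_mul_sub_le (ht0 i)) ?_
  simpa using ht.abs

theorem smul_eq_of_tendsto_of_forall_smul_eq {ι G K : Type*} {l : Filter ι} [NeBot l]
    [TopologicalSpace G] [TopologicalSpace K] [T2Space K] [SMul G K] [ContinuousSMul G K]
    {g : ι → G} {p : ι → K} {g₀ : G} {p₀ : K} (hg : Tendsto g l (𝓝 g₀))
    (hp : Tendsto p l (𝓝 p₀)) (hfix : ∀ i, g i • p i = p i) : g₀ • p₀ = p₀ :=
  tendsto_nhds_unique (hg.smul hp) (by simpa only [hfix] using hp)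

section OneParameter

variable {E G K : Type*} [AddCommGroup E] [Module ℝ E] [Group G] [MulAction G K]
  {exp : E → G}

theorem map_zero_eq_one_of_map_zsmul
    (hexp : ∀ (x : E) (k : ℤ), exp ((k : ℝ) • x) = (exp x) ^ k) : exp 0 = 1 := by
  simpa using hexp 0 0

theorem map_intCast_mul_smul_smul_eq
    (hexp : ∀ (x : E) (k : ℤ), exp ((k : ℝ) • x) = (exp x) ^ k) {x : E} {t : ℝ} {p : K}
    (hfix : exp (t • x) • p = p) (k : ℤ) : exp (((k : ℝ) * t) • x) • p = p := by
  rw [mul_smul, hexp]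
  exact zpow_mem (show exp (t • x) ∈ MulAction.stabilizer G p from hfix) k

end OneParameter

theorem limit_one_parameter_subgroup_in_stabilizer_general
    (E : Type*) [NormedAddCommGroup E] [NormedSpace ℝ E]
    (G : Type*) [Group G] [TopologicalSpace G]
    (K : Type*) [MetricSpace K]
    [MulAction G K] [ContinuousSMul G K]
    (exp : E → G) (hexp_cont : Continuous exp)
    (hexp : ∀ (x : E) (k : ℤ), exp ((k : ℝ) • x) = (exp x) ^ k)
    (p : ℕ → K) (plim : K) (hp : Tendsto p atTop (𝓝 plim))
    (t : ℕ → ℝ) (ht : Tendsto t atTop (𝓝 0))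
    (v : ℕ → E) (vlim : E) (hvlim : Tendsto v atTop (𝓝 vlim))
    (hfix : ∀ i, exp (t i • v i) • p i = p i)
    (hne : ∀ i, exp (t i • v i) ≠ 1) :
    ∀ s : ℝ, exp (s • vlim) • plim = plim := by
  intro s
  have ht0 : ∀ i, t i ≠ 0 := fun i h => hne i <| by
    rw [h, zero_smul, map_zero_eq_one_of_map_zsmul hexp]
  have hk : Tendsto (fun i => ((⌊s / t i⌋ : ℝ) * t i) • v i) atTop (𝓝 (s • vlim)) :=
    (tendsto_floor_div_mul ht ht0 s).smul hvlim
  exact smul_eq_of_tendsto_of_forall_smul_eq ((hexp_cont.tendsto _).comp hk) hp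
    fun i => map_intCast_mul_smul_smul_eq hexp (hfix i) _

/-- Limit one-parameter subgroup in a stabilizer.  Let `G` be a topological group
acting continuously on a compact metric space `K`, and let `exp : E → G` be a
continuous exponential map from a normed space (the Lie algebra) satisfying the
one-parameter property `exp((k : ℝ) • x) = (exp x) ^ k` for integers `k`.  If
`pᵢ → p`, `hᵢ = exp(tᵢ • vᵢ)` fixes `pᵢ`, `hᵢ ≠ e`, `tᵢ → 0`, `‖vᵢ‖ = 1` and
`vᵢ → v`, then `exp(t • v)` fixes `p` for every `t ∈ ℝ`; in particular the
stabilizer of `p` contains a one-parameter subgroup. -/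
theorem limit_one_parameter_subgroup_in_stabilizer
    (E : Type*) [NormedAddCommGroup E] [NormedSpace ℝ E]
    (G : Type*) [Group G] [TopologicalSpace G] [IsTopologicalGroup G]
    (K : Type*) [MetricSpace K] [CompactSpace K]
    [MulAction G K] [ContinuousSMul G K]
    (exp : E → G) (hexp_cont : Continuous exp)
    (hexp : ∀ (x : E) (k : ℤ), exp ((k : ℝ) • x) = (exp x) ^ k)
    (p : ℕ → K) (plim : K) (hp : Tendsto p atTop (𝓝 plim))
    (t : ℕ → ℝ) (ht : Tendsto t atTop (𝓝 0))
    (v : ℕ → E) (hv : ∀ i, ‖v i‖ = 1) (vlim : E) (hvlim : Tendsto v atTop (𝓝 vlim))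
    (hfix : ∀ i, exp (t i • v i) • p i = p i)
    (hne : ∀ i, exp (t i • v i) ≠ 1) :
    ∀ s : ℝ, exp (s • vlim) • plim = plim :=
  limit_one_parameter_subgroup_in_stabilizer_general E G K exp hexp_cont hexp p plim hp t ht v vlim
    hvlim hfix hne
end

section
/- Let V be a metric vector bundle with compatible connection over a compact Riemannian manifold M, and let S be a section with ∇*∇S = λS for some λ ≥ 0. Then the function u = |S| satisfies the distributional inequality Δu ≤ λu, where Δ is the nonnegative Laplacian on functions. -/
open scoped RealInnerProductSpace
open MeasureTheory

/-- The (nonnegative) Laplacian of a real-valued function on Euclidean space. -/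
noncomputable def lapl {n : ℕ} (f : EuclideanSpace ℝ (Fin n) → ℝ)
    (x : EuclideanSpace ℝ (Fin n)) : ℝ :=
  -∑ i : Fin n, fderiv ℝ (fun y => fderiv ℝ f y (EuclideanSpace.single i 1)) x
      (EuclideanSpace.single i 1)

/-- The connection Laplacian `∇*∇` of a section of the trivial bundle with fiber
`F` over Euclidean space. -/
noncomputable def connLapl {n : ℕ} {F : Type*} [NormedAddCommGroup F]
    [InnerProductSpace ℝ F] (S : EuclideanSpace ℝ (Fin n) → F)
    (x : EuclideanSpace ℝ (Fin n)) : F :=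
  -∑ i : Fin n, fderiv ℝ (fun y => fderiv ℝ S y (EuclideanSpace.single i 1)) x
      (EuclideanSpace.single i 1)

section Aux

variable {n : ℕ}

/-- finite sums of compactly supported functions are compactly supported -/
lemma hcs_sum {ι : Type*} (s : Finset ι) (f : ι → EuclideanSpace ℝ (Fin n) → ℝ)
    (h : ∀ i, HasCompactSupport (f i)) :
    HasCompactSupport (fun x => ∑ i ∈ s, f i x) := by
  classical
  induction s using Finset.induction_on with
  | empty =>
      simp only [Finset.sum_empty]
      exact HasCompactSupport.zero
  | insert _ _ hx ih =>
      simp only [Finset.sum_insert hx]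
      exact (h _).add ih

lemma cont_d {f : EuclideanSpace ℝ (Fin n) → ℝ} (hf : ContDiff ℝ (⊤ : ℕ∞) f)
    (v : EuclideanSpace ℝ (Fin n)) :
    ContDiff ℝ (⊤ : ℕ∞) (fun x => fderiv ℝ f x v) :=
  (hf.fderiv_right (by simp)).clm_apply contDiff_const

lemma cont_dd {f : EuclideanSpace ℝ (Fin n) → ℝ} (hf : ContDiff ℝ (⊤ : ℕ∞) f)
    (v : EuclideanSpace ℝ (Fin n)) :
    ContDiff ℝ (⊤ : ℕ∞) (fun x => fderiv ℝ (fun y => fderiv ℝ f y v) x v) :=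
  cont_d (cont_d hf v) v

lemma key_int {a b : EuclideanSpace ℝ (Fin n) → ℝ} (ha : Continuous a) (hb : Continuous b)
    (hbc : HasCompactSupport b) : Integrable (fun x => a x * b x) :=
  (ha.mul hb).integrable_of_hasCompactSupport (hbc.mul_left)

/-- double integration by parts in a fixed direction -/
lemma double_ibp {f φ : EuclideanSpace ℝ (Fin n) → ℝ} (hf : ContDiff ℝ (⊤ : ℕ∞) f)
    (hφ : ContDiff ℝ (⊤ : ℕ∞) φ) (hφc : HasCompactSupport φ) (v : EuclideanSpace ℝ (Fin n)) :
    ∫ x, f x * fderiv ℝ (fun y => fderiv ℝ φ y v) x v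
      = ∫ x, fderiv ℝ (fun y => fderiv ℝ f y v) x v * φ x := by
  have hg : ContDiff ℝ (⊤ : ℕ∞) (fun y => fderiv ℝ φ y v) := cont_d hφ v
  have hgc : HasCompactSupport (fun y => fderiv ℝ φ y v) := hφc.fderiv_apply ℝ v
  have hDf : ContDiff ℝ (⊤ : ℕ∞) (fun x => fderiv ℝ f x v) := cont_d hf v
  have hDg : ContDiff ℝ (⊤ : ℕ∞) (fun x => fderiv ℝ (fun y => fderiv ℝ φ y v) x v) := cont_dd hφ v
  have hDgc : HasCompactSupport (fun x => fderiv ℝ (fun y => fderiv ℝ φ y v) x v) :=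
    hgc.fderiv_apply ℝ v
  have hDDf : ContDiff ℝ (⊤ : ℕ∞) (fun x => fderiv ℝ (fun y => fderiv ℝ f y v) x v) := cont_dd hf v
  have h1 : ∫ x, f x * fderiv ℝ (fun y => fderiv ℝ φ y v) x v
      = - ∫ x, fderiv ℝ f x v * fderiv ℝ φ x v :=
    integral_mul_fderiv_eq_neg_fderiv_mul_of_integrable
      (key_int hDf.continuous hg.continuous hgc)
      (key_int hf.continuous hDg.continuous hDgc)
      (key_int hf.continuous hg.continuous hgc)
      (fun x _ => hf.differentiable (by simp) x) (fun x _ => hg.differentiable (by simp) x)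
  have h2 : ∫ x, (fderiv ℝ f x v) * fderiv ℝ φ x v
      = - ∫ x, fderiv ℝ (fun x => fderiv ℝ f x v) x v * φ x :=
    integral_mul_fderiv_eq_neg_fderiv_mul_of_integrable
      (key_int hDDf.continuous hφ.continuous hφc)
      (key_int hDf.continuous hg.continuous hgc)
      (key_int hDf.continuous hφ.continuous hφc)
      (fun x _ => hDf.differentiable (by simp) x) (fun x _ => hφ.differentiable (by simp) x)
  rw [h1, h2, neg_neg]

variable {F : Type*} [NormedAddCommGroup F] [InnerProductSpace ℝ F]
  {S : EuclideanSpace ℝ (Fin n) → F} {ε : ℝ}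

lemma q_pos (hε : 0 < ε) (x : EuclideanSpace ℝ (Fin n)) : 0 < ⟪S x, S x⟫ + ε^2 :=
  add_pos_of_nonneg_of_pos real_inner_self_nonneg (pow_pos hε 2)

lemma u_pos (hε : 0 < ε) (x : EuclideanSpace ℝ (Fin n)) :
    0 < Real.sqrt (⟪S x, S x⟫ + ε^2) :=
  Real.sqrt_pos.2 (q_pos hε x)

lemma contDiff_q (hS : ContDiff ℝ (⊤ : ℕ∞) S) :
    ContDiff ℝ (⊤ : ℕ∞) (fun y : EuclideanSpace ℝ (Fin n) => ⟪S y, S y⟫ + ε^2) :=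
  (hS.inner ℝ hS).add contDiff_const

lemma contDiff_u (hS : ContDiff ℝ (⊤ : ℕ∞) S) (hε : 0 < ε) :
    ContDiff ℝ (⊤ : ℕ∞) (fun y : EuclideanSpace ℝ (Fin n) => Real.sqrt (⟪S y, S y⟫ + ε^2)) := by
  rw [contDiff_iff_contDiffAt]
  intro x
  exact (Real.contDiffAt_sqrt (q_pos hε x).ne').comp x ((contDiff_q hS).contDiffAt)

lemma fderiv_q (hS : ContDiff ℝ (⊤ : ℕ∞) S) (y v : EuclideanSpace ℝ (Fin n)) :
    fderiv ℝ (fun z => ⟪S z, S z⟫ + ε^2) y v = 2 * ⟪fderiv ℝ S y v, S y⟫ := by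
  have hd : DifferentiableAt ℝ S y := hS.differentiable (by simp) y
  rw [fderiv_add_const, fderiv_inner_apply ℝ hd hd v, real_inner_comm]
  ring

lemma fderiv_u (hS : ContDiff ℝ (⊤ : ℕ∞) S) (hε : 0 < ε) (y v : EuclideanSpace ℝ (Fin n)) :
    fderiv ℝ (fun z => Real.sqrt (⟪S z, S z⟫ + ε^2)) y v
      = ⟪fderiv ℝ S y v, S y⟫ / Real.sqrt (⟪S y, S y⟫ + ε^2) := by
  have hq : HasFDerivAt (fun z : EuclideanSpace ℝ (Fin n) => ⟪S z, S z⟫ + ε^2)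
      (fderiv ℝ (fun z : EuclideanSpace ℝ (Fin n) => ⟪S z, S z⟫ + ε^2) y) y :=
    ((contDiff_q hS).differentiable (by simp) y).hasFDerivAt
  have h := (Real.hasDerivAt_sqrt (q_pos hε y).ne').comp_hasFDerivAt y hq
  simp only [Function.comp_def] at h
  rw [h.fderiv]
  simp only [ContinuousLinearMap.coe_smul', Pi.smul_apply, smul_eq_mul]
  rw [fderiv_q hS]
  rw [eq_div_iff (u_pos hε y).ne']
  have hu := (u_pos (S := S) hε y)
  field_simp

lemma second_deriv_bound (hS : ContDiff ℝ (⊤ : ℕ∞) S) (hε : 0 < ε)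
    (v x : EuclideanSpace ℝ (Fin n)) :
    -(fderiv ℝ (fun y => fderiv ℝ (fun z => Real.sqrt (⟪S z, S z⟫ + ε^2)) y v) x v)
      ≤ -⟪fderiv ℝ (fun y => fderiv ℝ S y v) x v, S x⟫ / Real.sqrt (⟪S x, S x⟫ + ε^2) := by
  have hd : Differentiable ℝ S := hS.differentiable (by simp)
  have hT : ContDiff ℝ (⊤ : ℕ∞) (fun y => fderiv ℝ S y v) :=
    (hS.fderiv_right (by simp)).clm_apply contDiff_const
  have hA : ContDiff ℝ (⊤ : ℕ∞) (fun y => ⟪fderiv ℝ S y v, S y⟫) := hT.inner ℝ hS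
  have hu := contDiff_u hS hε
  have e1 : (fun y => fderiv ℝ (fun z => Real.sqrt (⟪S z, S z⟫ + ε^2)) y v)
      = fun y => ⟪fderiv ℝ S y v, S y⟫ * (Real.sqrt (⟪S y, S y⟫ + ε^2))⁻¹ := by
    funext y
    rw [fderiv_u hS hε, div_eq_mul_inv]
  rw [e1]
  have hAx : DifferentiableAt ℝ (fun y => ⟪fderiv ℝ S y v, S y⟫) x :=
    (hA.differentiable (by simp)) x
  have hBx : DifferentiableAt ℝ (fun y => (Real.sqrt (⟪S y, S y⟫ + ε^2))⁻¹) x :=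
    ((hu.differentiable (by simp)) x).inv (u_pos hε x).ne'
  rw [fderiv_fun_mul hAx hBx]
  have hDB : fderiv ℝ (fun y => (Real.sqrt (⟪S y, S y⟫ + ε^2))⁻¹) x v
      = -((Real.sqrt (⟪S x, S x⟫ + ε^2))^2)⁻¹
        * (⟪fderiv ℝ S x v, S x⟫ / Real.sqrt (⟪S x, S x⟫ + ε^2)) := by
    have h := (hasDerivAt_inv (u_pos (S := S) hε x).ne').comp_hasFDerivAt x
      ((hu.differentiable (by simp)) x).hasFDerivAt
    simp only [Function.comp_def] at h
    rw [h.fderiv]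
    simp only [ContinuousLinearMap.coe_smul', Pi.smul_apply, smul_eq_mul]
    rw [fderiv_u hS hε]
  have hDA : fderiv ℝ (fun y => ⟪fderiv ℝ S y v, S y⟫) x v
      = ⟪fderiv ℝ S x v, fderiv ℝ S x v⟫
        + ⟪fderiv ℝ (fun y => fderiv ℝ S y v) x v, S x⟫ := by
    rw [fderiv_inner_apply ℝ ((hT.differentiable (by simp)) x) (hd x) v]
  simp only [ContinuousLinearMap.add_apply, ContinuousLinearMap.coe_smul', Pi.smul_apply,
    smul_eq_mul]
  rw [hDB, hDA]
  set u0 := Real.sqrt (⟪S x, S x⟫ + ε^2) with hu0_def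
  set a := ⟪fderiv ℝ S x v, S x⟫
  set b := ⟪fderiv ℝ S x v, fderiv ℝ S x v⟫
  set t := ⟪fderiv ℝ (fun y => fderiv ℝ S y v) x v, S x⟫
  have hu0 : 0 < u0 := u_pos hε x
  have hsq : u0^2 = ⟪S x, S x⟫ + ε^2 := Real.sq_sqrt (q_pos hε x).le
  have hcs : a * a ≤ b * ⟪S x, S x⟫ := real_inner_mul_inner_self_le _ _
  have hb : 0 ≤ b := real_inner_self_nonneg
  have hkey : a^2 ≤ b * u0^2 := by nlinarith [sq_nonneg ε]
  rw [← sub_nonneg]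
  have expand : -t / u0 - -(a * (-(u0 ^ 2)⁻¹ * (a / u0)) + u0⁻¹ * (b + t))
      = (b * u0^2 - a^2) / u0^3 := by
    field_simp
    ring
  rw [expand]
  exact div_nonneg (by linarith) (by positivity)

lemma lapl_u_le (hS : ContDiff ℝ (⊤ : ℕ∞) S) (hε : 0 < ε) {lam : ℝ} (hlam : 0 ≤ lam)
    (heig : ∀ x, connLapl S x = lam • S x) (x : EuclideanSpace ℝ (Fin n)) :
    lapl (fun y => Real.sqrt (⟪S y, S y⟫ + ε^2)) x
      ≤ lam * Real.sqrt (⟪S x, S x⟫ + ε^2) := by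
  have hu0 := u_pos (S := S) hε x
  have hB : ∑ i : Fin n, fderiv ℝ (fun y => fderiv ℝ S y (EuclideanSpace.single i 1)) x
      (EuclideanSpace.single i 1) = -(lam • S x) := by
    have h := heig x
    simp only [connLapl] at h
    exact neg_eq_iff_eq_neg.1 h
  have step1 : lapl (fun y => Real.sqrt (⟪S y, S y⟫ + ε^2)) x
      ≤ ∑ i : Fin n, -⟪fderiv ℝ (fun y => fderiv ℝ S y (EuclideanSpace.single i 1)) x
          (EuclideanSpace.single i 1), S x⟫ / Real.sqrt (⟪S x, S x⟫ + ε^2) := by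
    simp only [lapl]
    rw [← Finset.sum_neg_distrib]
    exact Finset.sum_le_sum fun i _ => second_deriv_bound hS hε _ x
  have step2 : ∑ i : Fin n, -⟪fderiv ℝ (fun y => fderiv ℝ S y (EuclideanSpace.single i 1)) x
          (EuclideanSpace.single i 1), S x⟫ / Real.sqrt (⟪S x, S x⟫ + ε^2)
      = lam * ⟪S x, S x⟫ / Real.sqrt (⟪S x, S x⟫ + ε^2) := by
    rw [← Finset.sum_div, Finset.sum_neg_distrib, ← sum_inner, hB]
    congr 1
    rw [inner_neg_left, real_inner_smul_left]
    ring
  have step3 : lam * ⟪S x, S x⟫ / Real.sqrt (⟪S x, S x⟫ + ε^2)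
      ≤ lam * Real.sqrt (⟪S x, S x⟫ + ε^2) := by
    rw [div_le_iff₀ hu0]
    have hsq : (Real.sqrt (⟪S x, S x⟫ + ε^2))^2 = ⟪S x, S x⟫ + ε^2 :=
      Real.sq_sqrt (q_pos hε x).le
    nlinarith [sq_nonneg ε]
  linarith [step1, step2 ▸ step1, step3]

end Aux

/-- If `S` is an eigensection, `∇*∇S = λS` with `λ ≥ 0`, on the (compact) flat
torus — modelled by a ℤⁿ-periodic section over Euclidean space — then `u = |S|`
satisfies `Δu ≤ λu` in the distributional sense: for every smooth nonnegative
compactly supported test function `φ`, `∫ |S| Δφ ≤ ∫ λ|S|φ`. -/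
theorem eigenscetion_norm_subsolution_distributional
    {n : ℕ} {F : Type*} [NormedAddCommGroup F] [InnerProductSpace ℝ F]
    (S : EuclideanSpace ℝ (Fin n) → F) (hS : ContDiff ℝ (⊤ : ℕ∞) S)
    (hper : ∀ (x : EuclideanSpace ℝ (Fin n)) (i : Fin n),
      S (x + EuclideanSpace.single i 1) = S x)
    (lam : ℝ) (hlam : 0 ≤ lam)
    (heig : ∀ x, connLapl S x = lam • S x) :
    ∀ φ : EuclideanSpace ℝ (Fin n) → ℝ, ContDiff ℝ (⊤ : ℕ∞) φ → HasCompactSupport φ →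
      (∀ x, 0 ≤ φ x) →
      ∫ x, ‖S x‖ * lapl φ x ≤ ∫ x, lam * (‖S x‖ * φ x) := by
  intro φ hφ hφc hφ0
  classical
  set e : Fin n → EuclideanSpace ℝ (Fin n) := fun i => EuclideanSpace.single i 1 with he
  have hlφ_cont : Continuous (lapl φ) := by
    have h1 : Continuous (fun x => ∑ i : Fin n,
        fderiv ℝ (fun y => fderiv ℝ φ y (e i)) x (e i)) :=
      continuous_finset_sum _ (fun i _ => (cont_dd hφ (e i)).continuous)
    exact h1.neg
  have hlφ_supp : HasCompactSupport (lapl φ) := by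
    have h1 : HasCompactSupport (fun x => ∑ i ∈ Finset.univ,
        fderiv ℝ (fun y => fderiv ℝ φ y (e i)) x (e i)) :=
      hcs_sum Finset.univ _ (fun i => (hφc.fderiv_apply ℝ (e i)).fderiv_apply ℝ (e i))
    exact h1.comp_left (g := fun z : ℝ => -z) neg_zero
  have hNS : Continuous fun x => ‖S x‖ := hS.continuous.norm
  have int_φ : Integrable φ := hφ.continuous.integrable_of_hasCompactSupport hφc
  have int_absl : Integrable (fun x => |lapl φ x|) :=
    hlφ_cont.abs.integrable_of_hasCompactSupport hlφ_supp.abs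
  have int_LHS : Integrable (fun x => ‖S x‖ * lapl φ x) := key_int hNS hlφ_cont hlφ_supp
  have int_RHS : Integrable (fun x => lam * (‖S x‖ * φ x)) := by
    simpa [mul_assoc] using key_int (continuous_const.mul hNS) hφ.continuous hφc
  set Cφ := ∫ x, |lapl φ x| with hCφ_def
  set Iφ := ∫ x, φ x with hIφ_def
  have hCφ0 : 0 ≤ Cφ := integral_nonneg fun x => abs_nonneg _
  have hIφ0 : 0 ≤ Iφ := integral_nonneg hφ0
  have hC0 : 0 ≤ Cφ + lam * Iφ := add_nonneg hCφ0 (mul_nonneg hlam hIφ0)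
  have main : ∀ ε : ℝ, 0 < ε →
      ∫ x, ‖S x‖ * lapl φ x ≤ (∫ x, lam * (‖S x‖ * φ x)) + ε * (Cφ + lam * Iφ) := by
    intro ε hε
    set u := fun y => Real.sqrt (⟪S y, S y⟫ + ε^2) with hu_def
    have hu : ContDiff ℝ (⊤ : ℕ∞) u := contDiff_u hS hε
    have hu_cont : Continuous u := hu.continuous
    have hbound1 : ∀ x, ‖S x‖ ≤ u x := by
      intro x
      have h1 : ‖S x‖ = Real.sqrt (⟪S x, S x⟫) := by
        rw [real_inner_self_eq_norm_sq, Real.sqrt_sq (norm_nonneg _)]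
      rw [hu_def, h1]
      exact Real.sqrt_le_sqrt (by nlinarith [sq_nonneg ε])
    have hbound2 : ∀ x, u x ≤ ‖S x‖ + ε := by
      intro x
      have h2 : ⟪S x, S x⟫ + ε^2 ≤ (‖S x‖ + ε)^2 := by
        rw [real_inner_self_eq_norm_sq]
        nlinarith [norm_nonneg (S x), hε.le]
      rw [hu_def]
      calc Real.sqrt (⟪S x, S x⟫ + ε^2) ≤ Real.sqrt ((‖S x‖ + ε)^2) := Real.sqrt_le_sqrt h2
        _ = ‖S x‖ + ε := Real.sqrt_sq (by positivity)
    have int_ul : Integrable (fun x => u x * lapl φ x) := key_int hu_cont hlφ_cont hlφ_supp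
    have step0 : ∫ x, ‖S x‖ * lapl φ x ≤ (∫ x, u x * lapl φ x) + ε * Cφ := by
      have hpt : ∀ x, ‖S x‖ * lapl φ x ≤ u x * lapl φ x + ε * |lapl φ x| := by
        intro x
        have habs : |‖S x‖ - u x| ≤ ε := by
          rw [abs_le]
          constructor
          · linarith [hbound2 x]
          · linarith [hbound1 x]
        have h3 : (‖S x‖ - u x) * lapl φ x ≤ ε * |lapl φ x| :=
          calc (‖S x‖ - u x) * lapl φ x ≤ |(‖S x‖ - u x) * lapl φ x| := le_abs_self _
            _ = |‖S x‖ - u x| * |lapl φ x| := abs_mul _ _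
            _ ≤ ε * |lapl φ x| := mul_le_mul_of_nonneg_right habs (abs_nonneg _)
        nlinarith [h3]
      calc ∫ x, ‖S x‖ * lapl φ x ≤ ∫ x, (u x * lapl φ x + ε * |lapl φ x|) :=
          integral_mono int_LHS (int_ul.add (int_absl.const_mul ε)) hpt
        _ = (∫ x, u x * lapl φ x) + ε * Cφ := by
          rw [integral_add int_ul (int_absl.const_mul ε), integral_const_mul]
    have hDDφc : ∀ i : Fin n, HasCompactSupport
        (fun x => fderiv ℝ (fun y => fderiv ℝ φ y (e i)) x (e i)) :=
      fun i => (hφc.fderiv_apply ℝ (e i)).fderiv_apply ℝ (e i)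
    have step1 : ∫ x, u x * lapl φ x = ∫ x, lapl u x * φ x := by
      have lhs_eq : (fun x => u x * lapl φ x) = fun x => ∑ i : Fin n,
          -(u x * fderiv ℝ (fun y => fderiv ℝ φ y (e i)) x (e i)) := by
        funext x
        simp only [lapl]
        rw [mul_neg, Finset.mul_sum, ← Finset.sum_neg_distrib]
      have rhs_eq : (fun x => lapl u x * φ x) = fun x => ∑ i : Fin n,
          -(fderiv ℝ (fun y => fderiv ℝ u y (e i)) x (e i) * φ x) := by
        funext x
        simp only [lapl]
        rw [neg_mul, Finset.sum_mul, ← Finset.sum_neg_distrib]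
      rw [lhs_eq, rhs_eq]
      rw [integral_finset_sum _ (fun i _ =>
        (show Integrable (fun x => -(u x * fderiv ℝ (fun y => fderiv ℝ φ y (e i)) x (e i)))
            volume from (key_int hu_cont (cont_dd hφ (e i)).continuous (hDDφc i)).neg))]
      rw [integral_finset_sum _ (fun i _ =>
        (show Integrable
            (fun x => -(fderiv ℝ (fun y => fderiv ℝ u y (e i)) x (e i) * φ x)) volume from
          (key_int (cont_dd hu (e i)).continuous hφ.continuous hφc).neg))]
      refine Finset.sum_congr rfl fun i _ => ?_
      rw [integral_neg, integral_neg, double_ibp hu hφ hφc (e i)]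
    have laplu_cont : Continuous (lapl u) :=
      (continuous_finset_sum _ fun i _ => (cont_dd hu (e i)).continuous).neg
    have int_a : Integrable (fun x => lam * (u x * φ x)) := by
      simpa [mul_assoc] using key_int (continuous_const.mul hu_cont) hφ.continuous hφc
    have step2 : ∫ x, lapl u x * φ x ≤ ∫ x, lam * (u x * φ x) := by
      refine integral_mono (key_int laplu_cont hφ.continuous hφc) int_a fun x => ?_
      have h1 := mul_le_mul_of_nonneg_right (lapl_u_le hS hε hlam heig x) (hφ0 x)
      calc lapl u x * φ x ≤ (lam * u x) * φ x := h1
        _ = lam * (u x * φ x) := by ring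
    have step3 : ∫ x, lam * (u x * φ x)
        ≤ (∫ x, lam * (‖S x‖ * φ x)) + ε * (lam * Iφ) := by
      have hpt : ∀ x, lam * (u x * φ x) ≤ lam * (‖S x‖ * φ x) + (ε * lam) * φ x := by
        intro x
        have h1 := hbound2 x
        have h2 := hφ0 x
        have h3 := mul_le_mul_of_nonneg_left h1 (mul_nonneg hlam h2)
        nlinarith [h3]
      calc ∫ x, lam * (u x * φ x)
          ≤ ∫ x, (lam * (‖S x‖ * φ x) + (ε * lam) * φ x) :=
            integral_mono int_a (int_RHS.add (int_φ.const_mul (ε * lam))) hpt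
        _ = (∫ x, lam * (‖S x‖ * φ x)) + ε * (lam * Iφ) := by
            rw [integral_add int_RHS (int_φ.const_mul (ε * lam))]
            simp only [integral_const_mul]
            ring
    have := step1 ▸ step0
    linarith [step2, step3]
  apply le_of_forall_pos_le_add
  intro δ hδ
  have hC1 : 0 < Cφ + lam * Iφ + 1 := by linarith
  have h := main (δ / (Cφ + lam * Iφ + 1)) (by positivity)
  have hle : δ / (Cφ + lam * Iφ + 1) * (Cφ + lam * Iφ) ≤ δ := by
    rw [div_mul_eq_mul_div, div_le_iff₀ hC1]
    nlinarith
  linarith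
end

section
/- Let V → M be a vector bundle with metric connection ∇ over a Riemannian manifold, with curvature R^V. Then for any smooth section S, the Bochner-type commutation formula holds: ∇(∇*∇)S = (∇*∇)(∇S) − (div¹R^V)S + ∇_{Ric(·)}S + 2 c₁₂(id ⊗ R^V)(∇S), where div¹R^V is minus the metric contraction of ∇R^V in the first two slots and c₁₂ denotes contraction of the first two tensor slots. -/
noncomputable section

variable {n : ℕ} {F : Type*} [NormedAddCommGroup F] [NormedSpace ℝ F]

/-- Covariant derivative `∇_X S = ∂_X S + ω(X)S` of a section of the trivial
bundle with fiber `F` over (flat) Euclidean space, for a connection form `ω`. -/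
def covD (ω : EuclideanSpace ℝ (Fin n) → (EuclideanSpace ℝ (Fin n) →L[ℝ] (F →L[ℝ] F)))
    (S : EuclideanSpace ℝ (Fin n) → F) (x X : EuclideanSpace ℝ (Fin n)) : F :=
  fderiv ℝ S x X + ω x X (S x)

/-- Second covariant derivative `∇²_{X,Y}S` (for constant vector fields `X`, `Y`
on the flat base, so that `∇_X Y = 0`). -/
def covD2 (ω : EuclideanSpace ℝ (Fin n) → (EuclideanSpace ℝ (Fin n) →L[ℝ] (F →L[ℝ] F)))
    (S : EuclideanSpace ℝ (Fin n) → F) (x X Y : EuclideanSpace ℝ (Fin n)) : F :=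
  fderiv ℝ (fun y => covD ω S y Y) x X + ω x X (covD ω S x Y)

/-- Connection Laplacian `∇*∇S = −Σᵢ ∇²_{eᵢ,eᵢ}S`. -/
def connLap (ω : EuclideanSpace ℝ (Fin n) → (EuclideanSpace ℝ (Fin n) →L[ℝ] (F →L[ℝ] F)))
    (S : EuclideanSpace ℝ (Fin n) → F) (x : EuclideanSpace ℝ (Fin n)) : F :=
  -∑ i : Fin n, covD2 ω S x (EuclideanSpace.single i 1) (EuclideanSpace.single i 1)

/-- Covariant derivative of a `T*M ⊗ V`-valued section (one-form with values in
the bundle), for constant vector fields on the flat base. -/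
def covDForm (ω : EuclideanSpace ℝ (Fin n) → (EuclideanSpace ℝ (Fin n) →L[ℝ] (F →L[ℝ] F)))
    (T : EuclideanSpace ℝ (Fin n) → EuclideanSpace ℝ (Fin n) → F)
    (x X Y : EuclideanSpace ℝ (Fin n)) : F :=
  fderiv ℝ (fun y => T y Y) x X + ω x X (T x Y)

/-- Connection Laplacian on bundle-valued one-forms. -/
def connLapForm (ω : EuclideanSpace ℝ (Fin n) → (EuclideanSpace ℝ (Fin n) →L[ℝ] (F →L[ℝ] F)))
    (T : EuclideanSpace ℝ (Fin n) → EuclideanSpace ℝ (Fin n) → F)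
    (x Y : EuclideanSpace ℝ (Fin n)) : F :=
  -∑ i : Fin n,
    (fderiv ℝ (fun y => covDForm ω T y (EuclideanSpace.single i 1) Y) x
        (EuclideanSpace.single i 1)
      + ω x (EuclideanSpace.single i 1)
          (covDForm ω T x (EuclideanSpace.single i 1) Y))

/-- Covariant derivative `(∇_X R^V)(Y,Z)` of the curvature endomorphism. -/
def covDCurv (ω : EuclideanSpace ℝ (Fin n) → (EuclideanSpace ℝ (Fin n) →L[ℝ] (F →L[ℝ] F)))
    (RV : EuclideanSpace ℝ (Fin n) → EuclideanSpace ℝ (Fin n) → EuclideanSpace ℝ (Fin n) → (F →L[ℝ] F))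
    (x X Y Z : EuclideanSpace ℝ (Fin n)) : F →L[ℝ] F :=
  fderiv ℝ (fun y => RV y Y Z) x X + (ω x X).comp (RV x Y Z) - (RV x Y Z).comp (ω x X)

/-- `div¹R^V`: minus the metric contraction of `∇R^V` in the first two slots. -/
def divCurv (ω : EuclideanSpace ℝ (Fin n) → (EuclideanSpace ℝ (Fin n) →L[ℝ] (F →L[ℝ] F)))
    (RV : EuclideanSpace ℝ (Fin n) → EuclideanSpace ℝ (Fin n) → EuclideanSpace ℝ (Fin n) → (F →L[ℝ] F))
    (x Z : EuclideanSpace ℝ (Fin n)) : F →L[ℝ] F :=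
  -∑ i : Fin n, covDCurv ω RV x (EuclideanSpace.single i 1) (EuclideanSpace.single i 1) Z


section BochnerAux

variable {n : ℕ} {F : Type*} [NormedAddCommGroup F] [NormedSpace ℝ F]
variable (ω : EuclideanSpace ℝ (Fin n) → (EuclideanSpace ℝ (Fin n) →L[ℝ] (F →L[ℝ] F)))

lemma covD_contDiff (hω : ContDiff ℝ (⊤ : ℕ∞) ω) {S : EuclideanSpace ℝ (Fin n) → F}
    (hS : ContDiff ℝ (⊤ : ℕ∞) S) (Y : EuclideanSpace ℝ (Fin n)) :
    ContDiff ℝ (⊤ : ℕ∞) (fun y => covD ω S y Y) := by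
  unfold covD
  exact ((hS.fderiv_right (by simp)).clm_apply contDiff_const).add
    ((hω.clm_apply contDiff_const).clm_apply hS)

lemma covD_add {f g : EuclideanSpace ℝ (Fin n) → F} {x : EuclideanSpace ℝ (Fin n)}
    (hf : DifferentiableAt ℝ f x) (hg : DifferentiableAt ℝ g x) (X : EuclideanSpace ℝ (Fin n)) :
    covD ω (fun y => f y + g y) x X = covD ω f x X + covD ω g x X := by
  unfold covD
  rw [fderiv_fun_add hf hg]
  simp only [ContinuousLinearMap.add_apply, map_add]
  abel

lemma covD_neg_sum {f : Fin n → EuclideanSpace ℝ (Fin n) → F} {x : EuclideanSpace ℝ (Fin n)}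
    (hf : ∀ i, DifferentiableAt ℝ (f i) x) (X : EuclideanSpace ℝ (Fin n)) :
    covD ω (fun y => -∑ i, f i y) x X = -∑ i, covD ω (f i) x X := by
  unfold covD
  rw [fderiv_fun_neg, fderiv_fun_sum (fun i _ => hf i)]
  simp only [ContinuousLinearMap.neg_apply, ContinuousLinearMap.sum_apply, map_neg, map_sum,
    Finset.sum_add_distrib, neg_add]

lemma covD_clm {c : EuclideanSpace ℝ (Fin n) → (F →L[ℝ] F)} {S : EuclideanSpace ℝ (Fin n) → F}
    {x : EuclideanSpace ℝ (Fin n)} (hc : DifferentiableAt ℝ c x) (hS : DifferentiableAt ℝ S x)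
    (v : EuclideanSpace ℝ (Fin n)) :
    covD ω (fun y => c y (S y)) x v
      = (fderiv ℝ c x v) (S x) + c x (fderiv ℝ S x v) + ω x v (c x (S x)) := by
  unfold covD
  rw [fderiv_clm_apply hc hS]
  simp only [ContinuousLinearMap.add_apply, ContinuousLinearMap.coe_comp', Function.comp_apply,
    ContinuousLinearMap.flip_apply]
  abel

end BochnerAux

/-- Bochner-type commutation formula
`∇(∇*∇)S = (∇*∇)(∇S) − (div¹R^V)S + ∇_{Ric(·)}S + 2c₁₂(id ⊗ R^V)(∇S)`
for a vector bundle with metric connection (here: any connection `ω` on the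
trivial bundle with fiber `F` over flat Euclidean space, whose Levi-Civita
connection is the ordinary derivative and whose Ricci endomorphism `Ric`
vanishes). -/
theorem bochner_commutation_formula
    {n : ℕ} {F : Type*} [NormedAddCommGroup F] [NormedSpace ℝ F]
    (ω : EuclideanSpace ℝ (Fin n) → (EuclideanSpace ℝ (Fin n) →L[ℝ] (F →L[ℝ] F)))
    (hω : ContDiff ℝ (⊤ : ℕ∞) ω)
    (RV : EuclideanSpace ℝ (Fin n) → EuclideanSpace ℝ (Fin n) → EuclideanSpace ℝ (Fin n) → (F →L[ℝ] F))
    (hRV : ∀ (S : EuclideanSpace ℝ (Fin n) → F), ContDiff ℝ (⊤ : ℕ∞) S →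
      ∀ x X Y, covD2 ω S x X Y - covD2 ω S x Y X = RV x X Y (S x))
    (hRVsmooth : ∀ Y Z, ContDiff ℝ (⊤ : ℕ∞) (fun x => RV x Y Z))
    (Ric : EuclideanSpace ℝ (Fin n) →ₗ[ℝ] EuclideanSpace ℝ (Fin n))
    (hRic : Ric = 0)
    (S : EuclideanSpace ℝ (Fin n) → F) (hS : ContDiff ℝ (⊤ : ℕ∞) S) :
    ∀ x X, covD ω (fun y => connLap ω S y) x X
      = connLapForm ω (fun y Y => covD ω S y Y) x X
        - divCurv ω RV x X (S x)
        + covD ω S x (Ric X)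
        + (2 : ℝ) • ∑ i : Fin n,
            RV x (EuclideanSpace.single i 1) X (covD ω S x (EuclideanSpace.single i 1)) := by
  intro x X
  set e : Fin n → EuclideanSpace ℝ (Fin n) := fun i => EuclideanSpace.single i 1 with he
  -- basic smoothness facts
  have hd : ∀ (T : EuclideanSpace ℝ (Fin n) → F), ContDiff ℝ (⊤ : ℕ∞) T →
      ∀ Y, ContDiff ℝ (⊤ : ℕ∞) (fun y => covD ω T y Y) := fun T hT Y => covD_contDiff ω hω hT Y
  have hd2 : ∀ Y Z, ContDiff ℝ (⊤ : ℕ∞) (fun y => covD2 ω S y Y Z) := by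
    intro Y Z
    have : (fun y => covD2 ω S y Y Z) = fun y => covD ω (fun z => covD ω S z Z) y Y := rfl
    rw [this]
    exact hd _ (hd S hS Z) Y
  -- antisymmetry of the curvature
  have hanti : ∀ y Y Z (v : F), RV y Y Z v = -(RV y Z Y v) := by
    intro y Y Z v
    have h1 := hRV (fun _ => v) contDiff_const y Y Z
    have h2 := hRV (fun _ => v) contDiff_const y Z Y
    rw [← h1, ← h2]; abel
  have hantiCLM : ∀ y Y Z, RV y Y Z = -(RV y Z Y) := by
    intro y Y Z
    ext v
    simpa using hanti y Y Z v
  have hcurv_anti : ∀ (v Y Z : EuclideanSpace ℝ (Fin n)),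
      covDCurv ω RV x v Y Z = -covDCurv ω RV x v Z Y := by
    intro v Y Z
    have hfun : (fun y => RV y Y Z) = fun y => -(RV y Z Y) := by
      funext y; exact hantiCLM y Y Z
    unfold covDCurv
    rw [hfun, fderiv_fun_neg, hantiCLM x Y Z]
    simp only [ContinuousLinearMap.comp_neg, ContinuousLinearMap.neg_comp,
      ContinuousLinearMap.neg_apply]
    abel
  -- key identity for each index
  have key : ∀ i : Fin n,
      covD ω (fun y => covD2 ω S y (e i) (e i)) x X
        = covD ω (fun y => covD2 ω S y (e i) X) x (e i)
          - covDCurv ω RV x (e i) (e i) X (S x)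
          - (2 : ℝ) • RV x (e i) X (covD ω S x (e i)) := by
    intro i
    -- step 1: commute the two outer derivatives, using hRV on the section ∇_{e i} S
    have h1 := hRV (fun y => covD ω S y (e i)) (hd S hS (e i)) x X (e i)
    have e1 : covD2 ω (fun y => covD ω S y (e i)) x X (e i)
        = covD ω (fun y => covD2 ω S y (e i) (e i)) x X := rfl
    have e2 : covD2 ω (fun y => covD ω S y (e i)) x (e i) X
        = covD ω (fun y => covD2 ω S y X (e i)) x (e i) := rfl
    rw [e1, e2] at h1
    -- step 2: commute the two inner derivatives pointwise
    have h2 : (fun y => covD2 ω S y X (e i))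
        = fun y => covD2 ω S y (e i) X + RV y X (e i) (S y) := by
      funext y
      have := hRV S hS y X (e i)
      linear_combination (norm := abel) this
    -- step 3: differentiate the curvature term
    have hc : DifferentiableAt ℝ (fun y => RV y X (e i)) x :=
      ((hRVsmooth X (e i)).differentiable (by simp)).differentiableAt
    have hSd : DifferentiableAt ℝ S x := (hS.differentiable (by simp)).differentiableAt
    have h3 : covD ω (fun y => RV y X (e i) (S y)) x (e i)
        = covDCurv ω RV x (e i) X (e i) (S x) + RV x X (e i) (covD ω S x (e i)) := by
      rw [covD_clm ω hc hSd (e i)]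
      unfold covDCurv covD
      simp only [ContinuousLinearMap.sub_apply, ContinuousLinearMap.add_apply,
        ContinuousLinearMap.coe_comp', Function.comp_apply, map_add]
      abel
    have h4 : covD ω (fun y => covD2 ω S y X (e i)) x (e i)
        = covD ω (fun y => covD2 ω S y (e i) X) x (e i)
          + (covDCurv ω RV x (e i) X (e i) (S x) + RV x X (e i) (covD ω S x (e i))) := by
      rw [h2, covD_add ω ((hd2 (e i) X).differentiable (by simp)).differentiableAt
        (((hRVsmooth X (e i)).clm_apply hS).differentiable (by simp)).differentiableAt, h3]
    have h5 : covD ω (fun y => covD2 ω S y (e i) (e i)) x X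
        = covD ω (fun y => covD2 ω S y X (e i)) x (e i) + RV x X (e i) (covD ω S x (e i)) := by
      linear_combination (norm := abel) h1
    rw [h5, h4, hcurv_anti (e i) X (e i), hanti x X (e i) (covD ω S x (e i))]
    simp only [ContinuousLinearMap.neg_apply, two_smul]
    abel
  -- assemble
  have hL : covD ω (fun y => connLap ω S y) x X
      = -∑ i, covD ω (fun y => covD2 ω S y (e i) (e i)) x X := by
    have : (fun y => connLap ω S y) = fun y => -∑ i, covD2 ω S y (e i) (e i) := rfl
    rw [this]
    exact covD_neg_sum ω (fun i => ((hd2 (e i) (e i)).differentiable (by simp)).differentiableAt) X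
  have hR : connLapForm ω (fun y Y => covD ω S y Y) x X
      = -∑ i, covD ω (fun y => covD2 ω S y (e i) X) x (e i) := rfl
  have hDiv : divCurv ω RV x X (S x)
      = -∑ i, covDCurv ω RV x (e i) (e i) X (S x) := by
    simp [divCurv, ContinuousLinearMap.neg_apply, ContinuousLinearMap.sum_apply, he]
  have hRicZ : covD ω S x (Ric X) = 0 := by
    rw [hRic]
    simp [covD]
  rw [hL, hR, hDiv, hRicZ]
  simp only [key]
  rw [Finset.smul_sum]
  simp only [Finset.sum_sub_distrib]
  abel


end
end
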